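/- Let A ⊊ ℝ^d be an open set. There exists a family (Q_k) of closed dyadic cubes with pairwise disjoint interiors whose union is A, and a constant c₃ depending only on d, such that for every k: 2·diam(Q_k) ≤ dist(Q_k, Aᶜ) ≤ c₃·diam(Q_k). -/

import Mathlib

open MeasureTheory Filter Topology Set
open scoped ENNReal

noncomputable section

abbrev Ed (d : ℕ) := EuclideanSpace ℝ (Fin d)

/-- `Q` is a closed dyadic cube of side length `2^{-l}` in `ℝ^d`,
i.e. `Q = 2^{-l}([0,1]^d + z)` for some `z ∈ ℤ^d`. -/
def IsDyadicCubeAt (d : ℕ) (l : ℤ) (Q : Set (Ed d)) : Prop :=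
  ∃ z : Fin d → ℤ, Q =
    {x : Ed d | ∀ i, x i ∈ Set.Icc ((z i : ℝ) * (2:ℝ) ^ (-l)) (((z i : ℝ) + 1) * (2:ℝ) ^ (-l))}

/-- `Q` is a closed dyadic cube in `ℝ^d`. -/
def IsDyadicCube (d : ℕ) (Q : Set (Ed d)) : Prop := ∃ l : ℤ, IsDyadicCubeAt d l Q

namespace WhitneyAux

/-- The closed dyadic cube at scale `2^{-l}` with lower corner `z`. -/
def cube (d : ℕ) (l : ℤ) (z : Fin d → ℤ) : Set (Ed d) :=
  {x : Ed d | ∀ i, x i ∈ Set.Icc ((z i : ℝ) * (2:ℝ) ^ (-l)) (((z i : ℝ) + 1) * (2:ℝ) ^ (-l))}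

variable {d : ℕ}

lemma side_pos (l : ℤ) : (0:ℝ) < (2:ℝ) ^ (-l) := by positivity

lemma cube_isDyadic (l : ℤ) (z : Fin d → ℤ) : IsDyadicCube d (cube d l z) := ⟨l, z, rfl⟩

lemma dist_le_of_mem_cube {l : ℤ} {z : Fin d → ℤ} {x y : Ed d}
    (hx : x ∈ cube d l z) (hy : y ∈ cube d l z) :
    dist x y ≤ Real.sqrt d * (2:ℝ) ^ (-l) := by
  rw [EuclideanSpace.dist_eq]
  have key : ∀ i, dist (x i) (y i) ^ 2 ≤ ((2:ℝ) ^ (-l)) ^ 2 := by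
    intro i
    have hxi := hx i; have hyi := hy i
    simp only [Set.mem_Icc] at hxi hyi
    have h1 : |x i - y i| ≤ (2:ℝ) ^ (-l) := by
      rw [abs_sub_le_iff]
      constructor <;> nlinarith [hxi.1, hxi.2, hyi.1, hyi.2]
    rw [Real.dist_eq]
    exact pow_le_pow_left₀ (abs_nonneg _) h1 2
  calc Real.sqrt (∑ i, dist (x i) (y i) ^ 2)
      ≤ Real.sqrt (∑ _i : Fin d, ((2:ℝ) ^ (-l)) ^ 2) := by
        apply Real.sqrt_le_sqrt
        exact Finset.sum_le_sum fun i _ => key i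
    _ = Real.sqrt d * (2:ℝ) ^ (-l) := by
        rw [Finset.sum_const, Finset.card_univ, Fintype.card_fin, nsmul_eq_mul,
          Real.sqrt_mul (by positivity), Real.sqrt_sq (le_of_lt (side_pos l))]

/-- lower corner of the cube. -/
def corner (d : ℕ) (l : ℤ) (z : Fin d → ℤ) : Ed d := WithLp.toLp 2 fun i => (z i : ℝ) * (2:ℝ) ^ (-l)

/-- upper corner of the cube. -/
def corner' (d : ℕ) (l : ℤ) (z : Fin d → ℤ) : Ed d := WithLp.toLp 2 fun i => ((z i : ℝ) + 1) * (2:ℝ) ^ (-l)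

lemma corner_mem (l : ℤ) (z : Fin d → ℤ) : corner d l z ∈ cube d l z := by
  intro i
  refine ⟨le_refl _, ?_⟩
  have := side_pos l
  show (z i : ℝ) * (2:ℝ) ^ (-l) ≤ ((z i : ℝ) + 1) * (2:ℝ) ^ (-l)
  nlinarith

lemma corner'_mem (l : ℤ) (z : Fin d → ℤ) : corner' d l z ∈ cube d l z := by
  intro i
  refine ⟨?_, le_refl _⟩
  have := side_pos l
  show (z i : ℝ) * (2:ℝ) ^ (-l) ≤ ((z i : ℝ) + 1) * (2:ℝ) ^ (-l)
  nlinarith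

lemma dist_corner_corner' (l : ℤ) (z : Fin d → ℤ) :
    dist (corner d l z) (corner' d l z) = Real.sqrt d * (2:ℝ) ^ (-l) := by
  rw [EuclideanSpace.dist_eq]
  have : ∀ i : Fin d, dist (corner d l z i) (corner' d l z i) ^ 2 = ((2:ℝ) ^ (-l)) ^ 2 := by
    intro i
    have : corner d l z i - corner' d l z i = -((2:ℝ) ^ (-l)) := by
      show (z i : ℝ) * (2:ℝ) ^ (-l) - ((z i : ℝ) + 1) * (2:ℝ) ^ (-l) = _
      ring
    rw [Real.dist_eq, this, abs_neg, abs_of_pos (side_pos l)]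
  rw [Finset.sum_congr rfl fun i _ => this i, Finset.sum_const, Finset.card_univ,
    Fintype.card_fin, nsmul_eq_mul, Real.sqrt_mul (by positivity),
    Real.sqrt_sq (le_of_lt (side_pos l))]

lemma isBounded_cube (l : ℤ) (z : Fin d → ℤ) : Bornology.IsBounded (cube d l z) :=
  Metric.isBounded_iff.2 ⟨Real.sqrt d * (2:ℝ) ^ (-l),
    fun _ hx _ hy => dist_le_of_mem_cube hx hy⟩

lemma diam_cube (l : ℤ) (z : Fin d → ℤ) :
    Metric.diam (cube d l z) = Real.sqrt d * (2:ℝ) ^ (-l) := by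
  apply le_antisymm
  · exact Metric.diam_le_of_forall_dist_le (by positivity)
      fun x hx y hy => dist_le_of_mem_cube hx hy
  · rw [← dist_corner_corner' l z]
    exact Metric.dist_le_diam_of_mem (isBounded_cube l z) (corner_mem l z) (corner'_mem l z)

lemma mem_interior_cube {l : ℤ} {z : Fin d → ℤ} {x : Ed d} :
    x ∈ interior (cube d l z) ↔
      ∀ i, x i ∈ Set.Ioo ((z i : ℝ) * (2:ℝ) ^ (-l)) (((z i : ℝ) + 1) * (2:ℝ) ^ (-l)) := by
  have hset : cube d l z = PiLp.homeomorph 2 (fun _ : Fin d => ℝ) ⁻¹' Set.pi Set.univ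
      (fun i => Set.Icc ((z i : ℝ) * (2:ℝ) ^ (-l)) (((z i : ℝ) + 1) * (2:ℝ) ^ (-l))) := by
    ext x
    exact ⟨fun h i _ => h i, fun h i => h i (Set.mem_univ i)⟩
  rw [hset, ← Homeomorph.preimage_interior, interior_pi_set Set.finite_univ]
  simp only [interior_Icc]
  exact ⟨fun h i => h i (Set.mem_univ i), fun h i _ => h i⟩

/-- One-dimensional dichotomy for dyadic intervals. -/
lemma one_dim {l l' : ℤ} (h : l ≤ l') (a a' : ℤ) :
    ((a:ℝ) * (2:ℝ)^(-l) ≤ (a':ℝ) * (2:ℝ)^(-l') ∧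
      ((a':ℝ)+1) * (2:ℝ)^(-l') ≤ ((a:ℝ)+1) * (2:ℝ)^(-l)) ∨
    (((a':ℝ)+1) * (2:ℝ)^(-l') ≤ (a:ℝ) * (2:ℝ)^(-l)) ∨
    (((a:ℝ)+1) * (2:ℝ)^(-l) ≤ (a':ℝ) * (2:ℝ)^(-l')) := by
  set n : ℕ := (l' - l).toNat with hn
  have hln : l' = l + (n:ℤ) := by rw [hn]; omega
  set k : ℤ := 2 ^ n with hk
  have hkpos : (0:ℤ) < k := by positivity
  have hk' : (2:ℝ) ^ (-l) = (k:ℝ) * (2:ℝ) ^ (-l') := by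
    have : (k:ℝ) = (2:ℝ) ^ (n:ℤ) := by
      rw [hk]; push_cast; rw [zpow_natCast]
    rw [this, ← zpow_add₀ (by norm_num : (2:ℝ) ≠ 0)]
    congr 1; omega
  have hside := side_pos l'
  rcases lt_or_ge a' (a * k) with hc | hc
  · right; left
    have : (a' + 1 : ℤ) ≤ a * k := by omega
    have : ((a':ℝ) + 1) ≤ (a:ℝ) * (k:ℝ) := by exact_mod_cast this
    rw [hk']
    nlinarith
  rcases lt_or_ge a' ((a+1) * k) with hc2 | hc2
  · left
    have h1 : ((a:ℝ)) * (k:ℝ) ≤ (a':ℝ) := by exact_mod_cast hc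
    have h2 : ((a':ℝ) + 1) ≤ ((a:ℝ)+1) * (k:ℝ) := by
      have : (a' + 1 : ℤ) ≤ (a+1) * k := by omega
      exact_mod_cast this
    constructor
    · rw [hk']; nlinarith
    · rw [hk']; nlinarith
  · right; right
    have : ((a:ℝ)+1) * (k:ℝ) ≤ (a':ℝ) := by exact_mod_cast hc2
    rw [hk']
    nlinarith

/-- Dichotomy: a smaller dyadic cube is contained in a bigger one, or their interiors
are disjoint. -/
lemma cube_dichotomy {l l' : ℤ} (h : l ≤ l') (z z' : Fin d → ℤ) :
    cube d l' z' ⊆ cube d l z ∨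
      Disjoint (interior (cube d l' z')) (interior (cube d l z)) := by
  by_cases hall : ∀ i, (z i : ℝ) * (2:ℝ)^(-l) ≤ (z' i : ℝ) * (2:ℝ)^(-l') ∧
      ((z' i:ℝ)+1) * (2:ℝ)^(-l') ≤ ((z i:ℝ)+1) * (2:ℝ)^(-l)
  · left
    intro x hx i
    have hxi := hx i
    simp only [Set.mem_Icc] at hxi ⊢
    exact ⟨le_trans (hall i).1 hxi.1, le_trans hxi.2 (hall i).2⟩
  · right
    push_neg at hall
    obtain ⟨i, hi⟩ := hall
    rw [Set.disjoint_left]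
    intro x hx hx'
    have h1 := mem_interior_cube.1 hx i
    have h2 := mem_interior_cube.1 hx' i
    simp only [Set.mem_Ioo] at h1 h2
    rcases one_dim h (z i) (z' i) with hcase | hcase | hcase
    · linarith [hi hcase.1, hcase.2]
    · linarith [h1.2, h2.1]
    · linarith [h1.1, h2.2]

lemma parent_subset (l : ℤ) (z : Fin d → ℤ) :
    cube d l z ⊆ cube d (l-1) (fun i => z i / 2) := by
  intro x hx i
  have hxi := hx i
  simp only [Set.mem_Icc] at hxi ⊢
  have hs : (2:ℝ) ^ (-(l-1)) = 2 * (2:ℝ) ^ (-l) := by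
    rw [show -(l-1) = 1 + (-l) by ring, zpow_add₀ (by norm_num : (2:ℝ) ≠ 0), zpow_one]
  have hz1 : (2 * (z i / 2) : ℤ) ≤ z i := by omega
  have hz2 : z i + 1 ≤ (2 * (z i / 2) + 2 : ℤ) := by omega
  have hz1' : (2:ℝ) * ((z i / 2 : ℤ):ℝ) ≤ (z i : ℝ) := by exact_mod_cast hz1
  have hz2' : ((z i : ℝ) + 1) ≤ 2 * ((z i / 2 : ℤ):ℝ) + 2 := by exact_mod_cast hz2
  have hside := side_pos l
  constructor
  · rw [hs]; nlinarith [hxi.1]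
  · rw [hs]; nlinarith [hxi.2]

/-- The Whitney condition for the cube `cube d l z` relative to the open set `A`. -/
def cond (A : Set (Ed d)) (l : ℤ) (z : Fin d → ℤ) : Prop :=
  ∀ y ∈ cube d l z, 2 * (Real.sqrt d * (2:ℝ) ^ (-l)) ≤ Metric.infDist y Aᶜ

lemma cond_mono {A : Set (Ed d)} {l l' : ℤ} {z z' : Fin d → ℤ} (h : l ≤ l')
    (hsub : cube d l' z' ⊆ cube d l z) (hc : cond A l z) : cond A l' z' := by
  intro y hy
  have h1 : (2:ℝ) ^ (-l') ≤ (2:ℝ) ^ (-l) :=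
    zpow_le_zpow_right₀ one_le_two (by omega)
  have := hc y (hsub hy)
  nlinarith [Real.sqrt_nonneg (d:ℝ)]

/-- The floor coordinates of `x` at scale `l`. -/
def zfl (l : ℤ) (x : Ed d) : Fin d → ℤ := fun i => ⌊x i * (2:ℝ)^l⌋

lemma mem_cube_zfl (l : ℤ) (x : Ed d) : x ∈ cube d l (zfl l x) := by
  intro i
  have hpow : (0:ℝ) < (2:ℝ)^l := by positivity
  have hmul : (2:ℝ)^(-l) * (2:ℝ)^l = 1 := by
    rw [← zpow_add₀ (by norm_num : (2:ℝ) ≠ 0)]; simp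
  have h1 : (⌊x i * (2:ℝ)^l⌋ : ℝ) ≤ x i * (2:ℝ)^l := Int.floor_le _
  have h2 : x i * (2:ℝ)^l < (⌊x i * (2:ℝ)^l⌋ : ℝ) + 1 := Int.lt_floor_add_one _
  simp only [Set.mem_Icc, zfl]
  constructor
  · have := mul_le_mul_of_nonneg_right h1 (le_of_lt (side_pos l))
    calc (⌊x i * (2:ℝ)^l⌋ : ℝ) * (2:ℝ)^(-l) ≤ x i * (2:ℝ)^l * (2:ℝ)^(-l) := this
      _ = x i := by rw [mul_assoc, mul_comm ((2:ℝ)^l), hmul, mul_one]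
  · have := mul_le_mul_of_nonneg_right (le_of_lt h2) (le_of_lt (side_pos l))
    calc x i = x i * (2:ℝ)^l * (2:ℝ)^(-l) := by
          rw [mul_assoc, mul_comm ((2:ℝ)^l), hmul, mul_one]
      _ ≤ ((⌊x i * (2:ℝ)^l⌋ : ℝ) + 1) * (2:ℝ)^(-l) := this

lemma zfl_parent (l : ℤ) (x : Ed d) : zfl (l-1) x = fun i => zfl l x i / 2 := by
  funext i
  simp only [zfl]
  set n : ℤ := ⌊x i * (2:ℝ)^l⌋ with hn
  have h1 : (n:ℝ) ≤ x i * (2:ℝ)^l := Int.floor_le _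
  have h2 : x i * (2:ℝ)^l < (n:ℝ) + 1 := Int.lt_floor_add_one _
  have hs : x i * (2:ℝ)^(l-1) = (x i * (2:ℝ)^l) / 2 := by
    rw [zpow_sub₀ (by norm_num : (2:ℝ) ≠ 0)]; ring
  rw [hs]
  apply Int.floor_eq_iff.2
  have e1 : (2 * (n / 2) : ℤ) ≤ n := by omega
  have e2 : n + 1 ≤ (2 * (n / 2) + 2 : ℤ) := by omega
  have e1' : (2:ℝ) * ((n / 2 : ℤ):ℝ) ≤ (n:ℝ) := by exact_mod_cast e1
  have e2' : (n:ℝ) + 1 ≤ 2 * ((n / 2 : ℤ):ℝ) + 2 := by exact_mod_cast e2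
  constructor
  · linarith
  · push_cast; linarith

lemma zfl_nested {l l' : ℤ} (h : l ≤ l') (x : Ed d) :
    cube d l' (zfl l' x) ⊆ cube d l (zfl l x) := by
  obtain ⟨n, rfl⟩ : ∃ n : ℕ, l' = l + n := ⟨(l' - l).toNat, by omega⟩
  clear h
  induction n with
  | zero => simp
  | succ m ih =>
    refine subset_trans ?_ ih
    have : l + (m : ℕ) = (l + (m+1 : ℕ)) - 1 := by push_cast; ring
    rw [this, zfl_parent]
    exact parent_subset _ _

/-- Membership of a cube in the Whitney family. -/
def good (A : Set (Ed d)) (l : ℤ) (z : Fin d → ℤ) : Prop :=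
  cond A l z ∧ ¬ cond A (l-1) (fun i => z i / 2)

lemma disj_of_good {A : Set (Ed d)} {l l' : ℤ} (h : l ≤ l') {z z' : Fin d → ℤ}
    (hQ : good A l z) (hQ' : good A l' z') (hne : cube d l z ≠ cube d l' z') :
    Disjoint (interior (cube d l z)) (interior (cube d l' z')) := by
  by_contra hdis
  rw [Set.not_disjoint_iff] at hdis
  obtain ⟨x, hx, hx'⟩ := hdis
  have hsub : cube d l' z' ⊆ cube d l z := by
    rcases cube_dichotomy h z z' with hc | hc
    · exact hc
    · exact absurd hx (Set.disjoint_left.1 hc hx')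
  rcases eq_or_lt_of_le h with rfl | hlt
  · -- same level: other direction of dichotomy gives equality
    rcases cube_dichotomy (le_refl l) z' z with hc | hc
    · exact hne (le_antisymm hc hsub)
    · exact absurd hx' (Set.disjoint_left.1 hc hx)
  · -- l < l' : the parent of the smaller cube is contained in the bigger cube
    have hll : l ≤ l' - 1 := by omega
    have hxP : x ∈ interior (cube d (l'-1) (fun i => z' i / 2)) :=
      interior_mono (parent_subset l' z') hx'
    have hPsub : cube d (l'-1) (fun i => z' i / 2) ⊆ cube d l z := by
      rcases cube_dichotomy hll z (fun i => z' i / 2) with hc | hc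
      · exact hc
      · exact absurd hx (Set.disjoint_left.1 hc hxP)
    exact hQ'.2 (cond_mono hll hPsub hQ.1)

end WhitneyAux

open WhitneyAux in
/-- Whitney decomposition with separation constant `2`: every proper open subset
`A ⊊ ℝ^d` is the union of closed dyadic cubes with pairwise disjoint interiors such
that `2 diam(Q) ≤ dist(Q, Aᶜ) ≤ c₃ diam(Q)`, where `c₃` depends only on `d`. -/
theorem whitney_decomposition_separated (d : ℕ) :
    ∃ c₃ : ℝ, 0 < c₃ ∧
      ∀ A : Set (Ed d), IsOpen A → A ≠ Set.univ →
        ∃ 𝒬 : Set (Set (Ed d)),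
          (∀ Q ∈ 𝒬, IsDyadicCube d Q) ∧
          𝒬.PairwiseDisjoint interior ∧
          ⋃₀ 𝒬 = A ∧
          ∀ Q ∈ 𝒬,
            (∀ x ∈ Q, 2 * Metric.diam Q ≤ Metric.infDist x Aᶜ) ∧
            (∃ x ∈ Q, Metric.infDist x Aᶜ ≤ c₃ * Metric.diam Q) := by
  classical
  refine ⟨6, by norm_num, fun A hAopen hAne => ?_⟩
  rcases Nat.eq_zero_or_pos d with rfl | hd
  · -- dimension 0 : A must be empty
    have hsub : Subsingleton (Ed 0) := ⟨fun a b => by ext i; exact i.elim0⟩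
    have hAempty : A = ∅ := by
      by_contra hne
      obtain ⟨x, hx⟩ := Set.nonempty_iff_ne_empty.2 hne
      apply hAne
      ext y
      simp only [Set.mem_univ, iff_true]
      rwa [hsub.elim y x]
    refine ⟨∅, by simp, by simp, by simp [hAempty], by simp⟩
  · -- main case d ≥ 1
    have hdpos : (0:ℝ) < Real.sqrt d := Real.sqrt_pos.2 (by exact_mod_cast hd)
    have hAcne : Aᶜ.Nonempty := by
      rw [Set.nonempty_compl]; exact hAne
    -- the Whitney family
    set 𝒬 : Set (Set (Ed d)) :=
      {Q | ∃ l z, Q = cube d l z ∧ good A l z} with h𝒬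
    refine ⟨𝒬, ?_, ?_, ?_, ?_⟩
    · rintro Q ⟨l, z, rfl, -⟩
      exact cube_isDyadic l z
    · -- pairwise disjoint interiors
      rintro Q ⟨l, z, rfl, hg⟩ Q' ⟨l', z', rfl, hg'⟩ hne
      rcases le_total l l' with h | h
      · exact disj_of_good h hg hg' hne
      · exact (disj_of_good h hg' hg (Ne.symm hne)).symm
    · -- union is A
      apply Set.eq_of_subset_of_subset
      · rintro y ⟨Q, ⟨l, z, rfl, hg⟩, hy⟩
        have h1 := hg.1 y hy
        have h2 : (0:ℝ) < 2 * (Real.sqrt d * (2:ℝ)^(-l)) := by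
          have := side_pos l; positivity
        by_contra hyA
        have : Metric.infDist y Aᶜ = 0 := Metric.infDist_zero_of_mem hyA
        linarith
      · intro x hx
        -- the set of levels whose floor cube works
        set S : ℤ → Prop := fun l => cond A l (zfl l x) with hS
        have hδ : 0 < Metric.infDist x Aᶜ :=
          (hAopen.isClosed_compl.notMem_iff_infDist_pos hAcne).1 (by simpa using hx)
        set δ := Metric.infDist x Aᶜ with hδdef
        -- S is nonempty
        have hSne : ∃ l, S l := by
          obtain ⟨n, hn⟩ := exists_pow_lt_of_lt_one
            (show (0:ℝ) < δ / (3 * Real.sqrt d) by positivity)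
            (show (1:ℝ)/2 < 1 by norm_num)
          refine ⟨(n:ℤ), ?_⟩
          have hside : (2:ℝ)^(-(n:ℤ)) < δ / (3 * Real.sqrt d) := by
            have : (2:ℝ)^(-(n:ℤ)) = ((1:ℝ)/2)^n := by
              rw [zpow_neg, zpow_natCast, one_div, inv_pow]
            rw [this]; exact hn
          have hkey : 3 * (Real.sqrt d * (2:ℝ)^(-(n:ℤ))) ≤ δ := by
            rw [lt_div_iff₀ (by positivity)] at hside
            nlinarith
          intro y hy
          have hdxy : dist x y ≤ Real.sqrt d * (2:ℝ)^(-(n:ℤ)) :=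
            dist_le_of_mem_cube (mem_cube_zfl _ x) hy
          have := Metric.infDist_le_infDist_add_dist (x := x) (y := y) (s := Aᶜ)
          linarith [dist_comm x y]
        -- S is bounded below
        have hSbdd : ∃ b : ℤ, ∀ l, S l → b ≤ l := by
          obtain ⟨a, ha⟩ := hAcne
          obtain ⟨n, hn⟩ := pow_unbounded_of_one_lt (dist x a / (2 * Real.sqrt d))
            (show (1:ℝ) < 2 by norm_num)
          refine ⟨-(n:ℤ), fun l hl => ?_⟩
          have h1 : 2 * (Real.sqrt d * (2:ℝ)^(-l)) ≤ δ := hl x (mem_cube_zfl l x)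
          have h2 : δ ≤ dist x a := Metric.infDist_le_dist_of_mem ha
          have h3 : (2:ℝ)^(-l) ≤ dist x a / (2 * Real.sqrt d) := by
            rw [le_div_iff₀ (by positivity)]
            nlinarith
          have h4 : (2:ℝ)^(-l) < (2:ℝ)^(n:ℤ) := by
            calc (2:ℝ)^(-l) ≤ dist x a / (2 * Real.sqrt d) := h3
              _ < 2^n := hn
              _ = (2:ℝ)^(n:ℤ) := by rw [zpow_natCast]
          have := (zpow_lt_zpow_iff_right₀ (show (1:ℝ) < 2 by norm_num)).1 h4
          omega
        obtain ⟨b, hb⟩ := hSbdd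
        obtain ⟨lmin, hlmin, hlmin'⟩ :=
          Int.exists_least_of_bdd (P := S) ⟨b, hb⟩ hSne
        refine ⟨cube d lmin (zfl lmin x), ⟨lmin, zfl lmin x, rfl, hlmin, ?_⟩,
          mem_cube_zfl lmin x⟩
        -- parent fails
        rw [← zfl_parent lmin x]
        intro hcontra
        have : lmin ≤ lmin - 1 := hlmin' _ hcontra
        omega
    · -- the two distance estimates
      rintro Q ⟨l, z, rfl, hg⟩
      constructor
      · intro x hx
        have := hg.1 x hx
        rw [diam_cube]
        linarith
      · -- upper estimate from failure of the parent condition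
        have hfail := hg.2
        unfold WhitneyAux.cond at hfail
        push_neg at hfail
        obtain ⟨y, hy, hylt⟩ := hfail
        refine ⟨corner d l z, corner_mem l z, ?_⟩
        have hcP : corner d l z ∈ cube d (l-1) (fun i => z i / 2) :=
          parent_subset l z (corner_mem l z)
        have hdist : dist (corner d l z) y ≤ Real.sqrt d * (2:ℝ)^(-(l-1)) :=
          dist_le_of_mem_cube hcP hy
        have htri := Metric.infDist_le_infDist_add_dist
          (x := corner d l z) (y := y) (s := Aᶜ)
        have hs : (2:ℝ)^(-(l-1)) = 2 * (2:ℝ)^(-l) := by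
          rw [show -(l-1) = 1 + (-l) by ring, zpow_add₀ (by norm_num : (2:ℝ) ≠ 0), zpow_one]
        rw [diam_cube]
        rw [hs] at hylt hdist
        linarith

end
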